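/- arXiv:2507.06900 — 9 statements merged into one kernel-verified Lean document; each statement's English description precedes it below -/
import Mathlib

section
/- Let F be a field, let k₁, k₂, k₃ ∈ F, and let a, b, c ∈ F be nonzero. Define 𝓜(a,b,c) := (a² + b² + c² + k₁·b·c + k₂·a·c + k₃·a·b)/(a·b·c). Then the generalized Markov invariant is preserved by each of the three generalized mutations: (i) if b² + k₁·b·c + c² ≠ 0 then 𝓜((b² + k₁·b·c + c²)/a, b, c) = 𝓜(a,b,c); (ii) if a² + k₂·a·c + c² ≠ 0 then 𝓜(a, (a² + k₂·a·c + c²)/b, c) = 𝓜(a,b,c); (iii) if a² + k₃·a·b + b² ≠ 0 then 𝓜(a, b, (a² + k₃·a·b + b²)/c) = 𝓜(a,b,c). -/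
/-!
Viewed as a polynomial in `a`, the numerator of `𝓜(a,b,c)` is `a² + (k₂c + k₃b)a + d` with
`d = b² + k₁bc + c²`, so `bc·𝓜(a,b,c) = a + d/a + k₂c + k₃b`. The right-hand side is unchanged
by the involution `a ↦ d/a`, which is the first mutation. The other two mutations reduce to the
first because `𝓜` is symmetric under permuting `a, b, c` together with `k₁, k₂, k₃`.
-/

/-- The `(k₁,k₂,k₃)`-generalized Markov invariant
`𝓜(a,b,c) = (a² + b² + c² + k₁bc + k₂ac + k₃ab)/(abc)`. -/
def markovInv {F : Type*} [Field F] (k₁ k₂ k₃ : F) (a b c : F) : F :=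
  (a ^ 2 + b ^ 2 + c ^ 2 + k₁ * b * c + k₂ * a * c + k₃ * a * b) / (a * b * c)

section

variable {F : Type*} [Field F] {k₁ k₂ k₃ a b c : F}

theorem markovInv_eq_of_ne_zero (ha : a ≠ 0) :
    markovInv k₁ k₂ k₃ a b c =
      (a + (b ^ 2 + k₁ * b * c + c ^ 2) / a + k₂ * c + k₃ * b) / (b * c) := by
  unfold markovInv
  field_simp
  ring

theorem markovInv_mutate_fst (ha : a ≠ 0) (hd : b ^ 2 + k₁ * b * c + c ^ 2 ≠ 0) :
    markovInv k₁ k₂ k₃ ((b ^ 2 + k₁ * b * c + c ^ 2) / a) b c = markovInv k₁ k₂ k₃ a b c := by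
  rw [markovInv_eq_of_ne_zero (div_ne_zero hd ha), markovInv_eq_of_ne_zero ha,
    div_div_cancel₀ hd]
  ring

end

theorem markovInv_swap_fst_snd {F : Type*} [Field F] (k₁ k₂ k₃ a b c : F) :
    markovInv k₁ k₂ k₃ a b c = markovInv k₂ k₁ k₃ b a c := by
  unfold markovInv
  ring

theorem markovInv_swap_fst_thd {F : Type*} [Field F] (k₁ k₂ k₃ a b c : F) :
    markovInv k₁ k₂ k₃ a b c = markovInv k₃ k₂ k₁ c b a := by
  unfold markovInv
  ring

/-- The generalized Markov invariant is preserved by each of the three generalized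
mutations. -/
theorem markovInv_mutation_invariant {F : Type*} [Field F] (k₁ k₂ k₃ a b c : F)
    (ha : a ≠ 0) (hb : b ≠ 0) (hc : c ≠ 0) :
    (b ^ 2 + k₁ * b * c + c ^ 2 ≠ 0 →
      markovInv k₁ k₂ k₃ ((b ^ 2 + k₁ * b * c + c ^ 2) / a) b c =
        markovInv k₁ k₂ k₃ a b c) ∧
    (a ^ 2 + k₂ * a * c + c ^ 2 ≠ 0 →
      markovInv k₁ k₂ k₃ a ((a ^ 2 + k₂ * a * c + c ^ 2) / b) c =
        markovInv k₁ k₂ k₃ a b c) ∧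
    (a ^ 2 + k₃ * a * b + b ^ 2 ≠ 0 →
      markovInv k₁ k₂ k₃ a b ((a ^ 2 + k₃ * a * b + b ^ 2) / c) =
        markovInv k₁ k₂ k₃ a b c) := by
  refine ⟨markovInv_mutate_fst ha, fun hd => ?_, fun hd => ?_⟩
  · rw [markovInv_swap_fst_snd, markovInv_mutate_fst hb hd, markovInv_swap_fst_snd]
  · have hd_comm : a ^ 2 + k₃ * a * b + b ^ 2 = b ^ 2 + k₃ * b * a + a ^ 2 := by ring
    rw [hd_comm] at hd ⊢
    rw [markovInv_swap_fst_thd, markovInv_mutate_fst hc hd, markovInv_swap_fst_thd]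
end

section
/- Let F be a field, let k₁, k₂, k₃ ∈ F, let a, b, c ∈ F be nonzero, and let 𝓜 ∈ F satisfy a² + b² + c² + k₁·b·c + k₂·a·c + k₃·a·b = 𝓜·a·b·c. Then x := 𝓜·a − k₁, y := 𝓜·b − k₂, z := 𝓜·c − k₃ satisfy the second (k₁,k₂,k₃)-generalized Markov equation: x² + y² + z² + (2k₁ + k₂k₃)·x + (2k₂ + k₁k₃)·y + (2k₃ + k₁k₂)·z + k₁² + k₂² + k₃² + 2k₁k₂k₃ = x·y·z. -/
theorem second_markov_solution_general {F : Type*} [Field F] (k₁ k₂ k₃ a b c M : F)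
    (h : a ^ 2 + b ^ 2 + c ^ 2 + k₁ * b * c + k₂ * a * c + k₃ * a * b = M * a * b * c) :
    (M * a - k₁) ^ 2 + (M * b - k₂) ^ 2 + (M * c - k₃) ^ 2
      + (2 * k₁ + k₂ * k₃) * (M * a - k₁)
      + (2 * k₂ + k₁ * k₃) * (M * b - k₂)
      + (2 * k₃ + k₁ * k₂) * (M * c - k₃)
      + k₁ ^ 2 + k₂ ^ 2 + k₃ ^ 2 + 2 * k₁ * k₂ * k₃
      = (M * a - k₁) * (M * b - k₂) * (M * c - k₃) := by
  linear_combination M ^ 2 * h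

/-- If `(a,b,c)` (all nonzero) satisfies the generalized Markov equation
`a² + b² + c² + k₁bc + k₂ac + k₃ab = 𝓜abc`, then
`(𝓜a − k₁, 𝓜b − k₂, 𝓜c − k₃)` satisfies the second `(k₁,k₂,k₃)`-generalized
Markov equation. -/
theorem second_markov_solution {F : Type*} [Field F] (k₁ k₂ k₃ a b c M : F)
    (ha : a ≠ 0) (hb : b ≠ 0) (hc : c ≠ 0)
    (h : a ^ 2 + b ^ 2 + c ^ 2 + k₁ * b * c + k₂ * a * c + k₃ * a * b = M * a * b * c) :
    (M * a - k₁) ^ 2 + (M * b - k₂) ^ 2 + (M * c - k₃) ^ 2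
      + (2 * k₁ + k₂ * k₃) * (M * a - k₁)
      + (2 * k₂ + k₁ * k₃) * (M * b - k₂)
      + (2 * k₃ + k₁ * k₂) * (M * c - k₃)
      + k₁ ^ 2 + k₂ ^ 2 + k₃ ^ 2 + 2 * k₁ * k₂ * k₃
      = (M * a - k₁) * (M * b - k₂) * (M * c - k₃) :=
  second_markov_solution_general k₁ k₂ k₃ a b c M h
end

section
/- Let R be a commutative ring, let 𝓜, k ∈ R, and let P be a 2×2 matrix over R with det(P) = 1 and tr(P) = 𝓜·P₁₂ − k, where P₁₂ is the (1,2)-entry of P. Let E be the 2×2 matrix with rows (0,0) and (𝓜,0). Then P·E·P = (tr(P) + k)·P + E, and P⁻¹·E·P⁻¹ = −(tr(P⁻¹) + k)·P⁻¹ + E. -/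
/-!
Writing `E = 𝓜 e₁₀`, the entries of `P * E * P` are `𝓜 P_{a1} P_{0b}`, and
`P_{a1} P_{0b} - P_{01} P_{ab}` vanishes except at `(a, b) = (1, 0)`, where it is `det P`.
Hence `P E P = 𝓜 P₁₂ • P + det P • E` for every `2 × 2` matrix. For `det P = 1` the
hypothesis on the trace makes `𝓜 P₁₂ = tr P + k`; the inverse is the adjugate, which has
the same trace and determinant and the opposite `(1,2)`-entry, so the same identity gives
the second claim.
-/

open Matrix

namespace Matrix

variable {R : Type*} [CommRing R]

theorem mul_lowerElem_mul_fin_two (M : R) (P : Matrix (Fin 2) (Fin 2) R) :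
    P * !![(0 : R), 0; M, 0] * P = (M * P 0 1) • P + P.det • !![(0 : R), 0; M, 0] := by
  ext i j
  fin_cases i <;> fin_cases j <;>
    simp [Matrix.mul_apply, Fin.sum_univ_two, Matrix.det_fin_two] <;> ring

theorem inv_eq_adjugate_of_det_eq_one {n : Type*} [Fintype n] [DecidableEq n]
    {P : Matrix n n R} (hdet : P.det = 1) : P⁻¹ = P.adjugate := by
  rw [inv_def, hdet, Ring.inverse_one, one_smul]

theorem det_inv_of_det_eq_one {n : Type*} [Fintype n] [DecidableEq n]
    {P : Matrix n n R} (hdet : P.det = 1) : P⁻¹.det = 1 := by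
  rw [det_nonsing_inv, hdet, Ring.inverse_one]

theorem trace_inv_fin_two_of_det_eq_one {P : Matrix (Fin 2) (Fin 2) R} (hdet : P.det = 1) :
    P⁻¹.trace = P.trace := by
  rw [inv_eq_adjugate_of_det_eq_one hdet, adjugate_fin_two, trace_fin_two_of, trace_fin_two,
    add_comm]

theorem inv_apply_zero_one_fin_two_of_det_eq_one {P : Matrix (Fin 2) (Fin 2) R}
    (hdet : P.det = 1) : P⁻¹ 0 1 = -P 0 1 := by
  simp [inv_eq_adjugate_of_det_eq_one hdet, adjugate_fin_two]

end Matrix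

/-- Lemma on multiplying a matrix with `tr(P) = 𝓜·P₁₂ − k` around the elementary
matrix `E = [[0,0],[𝓜,0]]`. -/
theorem mul_E_mul {R : Type*} [CommRing R] (M k : R) (P : Matrix (Fin 2) (Fin 2) R)
    (hdet : P.det = 1) (htr : P.trace = M * P 0 1 - k) :
    P * !![(0 : R), 0; M, 0] * P = (P.trace + k) • P + !![(0 : R), 0; M, 0] ∧
    P⁻¹ * !![(0 : R), 0; M, 0] * P⁻¹ =
      (-(P⁻¹.trace + k)) • P⁻¹ + !![(0 : R), 0; M, 0] := by
  have hk : P.trace + k = M * P 0 1 := by rw [htr, sub_add_cancel]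
  constructor
  · rw [mul_lowerElem_mul_fin_two, hdet, one_smul, hk]
  · rw [mul_lowerElem_mul_fin_two, det_inv_of_det_eq_one hdet, one_smul,
      inv_apply_zero_one_fin_two_of_det_eq_one hdet, trace_inv_fin_two_of_det_eq_one hdet, hk,
      mul_neg]
end

section
/- Let R be a commutative ring and let 𝓜, α, β, γ ∈ R. Let P, Q, N be 2×2 matrices over R with det(P) = det(N) = 1, tr(P) = 𝓜·P₁₂ − α, tr(N) = 𝓜·N₁₂ − γ, and Q = P·N − S(β). Then tr(P·Q − S(γ)) = tr(P)·tr(Q) − tr(N) − α·β − 2·γ, and tr(Q·N − S(α)) = tr(Q)·tr(N) − tr(P) − β·γ − 2·α. -/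
open Matrix

/-- The matrix `S(k) = [[k, 0], [k·𝓜, k]]`. -/
def Smat {R : Type*} [CommRing R] (M k : R) : Matrix (Fin 2) (Fin 2) R :=
  !![k, 0; k * M, k]

/-!
Cayley–Hamilton for `2 × 2` matrices, `A² = tr(A)·A − det(A)·1`, gives
`tr(P·(P·N)) = tr(P)·tr(P·N) − tr(N)` and `tr((P·N)·N) = tr(N)·tr(P·N) − tr(P)` when
`det P = det N = 1`. The correction terms coming from `S(k)` have trace
`k·(tr A + 𝓜·A₁₂)`, which the trace conditions on `P` and `N` turn into `k·(2·tr A + α)`,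
resp. `k·(2·tr A + γ)`; the `2·tr A` parts cancel against `tr(P·N) = tr(Q) + 2β`.
-/

namespace Matrix

variable {R : Type*} [CommRing R]

theorem mul_self_eq_trace_smul_sub_det_smul_one (A : Matrix (Fin 2) (Fin 2) R) :
    A * A = A.trace • A - A.det • (1 : Matrix (Fin 2) (Fin 2) R) := by
  ext i j
  fin_cases i <;> fin_cases j <;>
    simp only [Fin.isValue, Fin.zero_eta, Fin.mk_one, mul_apply, Fin.sum_univ_two, trace_fin_two,
      det_fin_two, sub_apply, smul_apply, smul_eq_mul, one_apply_eq, ne_eq, zero_ne_one,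
      one_ne_zero, not_false_eq_true, one_apply_ne] <;> ring

theorem trace_mul_mul_self_left (A B : Matrix (Fin 2) (Fin 2) R) :
    (A * (A * B)).trace = A.trace * (A * B).trace - A.det * B.trace := by
  rw [← Matrix.mul_assoc, mul_self_eq_trace_smul_sub_det_smul_one, Matrix.sub_mul,
    smul_mul, smul_mul, Matrix.one_mul, trace_sub, trace_smul, trace_smul,
    smul_eq_mul, smul_eq_mul]

theorem trace_mul_mul_self_right (A B : Matrix (Fin 2) (Fin 2) R) :
    (B * A * A).trace = A.trace * (B * A).trace - A.det * B.trace := by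
  rw [Matrix.mul_assoc, mul_self_eq_trace_smul_sub_det_smul_one, Matrix.mul_sub,
    Matrix.mul_smul, Matrix.mul_smul, Matrix.mul_one, trace_sub, trace_smul, trace_smul,
    smul_eq_mul, smul_eq_mul]

end Matrix

section Smat

variable {R : Type*} [CommRing R] (M k : R) (A : Matrix (Fin 2) (Fin 2) R)

theorem trace_Smat : (Smat M k).trace = 2 * k := by
  rw [Smat, trace_fin_two_of]
  ring

theorem trace_mul_Smat : (A * Smat M k).trace = k * (A.trace + M * A 0 1) := by
  simp only [Smat, trace_fin_two, mul_apply, of_apply, cons_val', cons_val_zero, cons_val_one,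
    cons_val_fin_one, Fin.sum_univ_two, Fin.isValue]
  ring

theorem trace_Smat_mul : (Smat M k * A).trace = k * (A.trace + M * A 0 1) := by
  rw [trace_mul_comm, trace_mul_Smat]

end Smat

/-- Trace formula for the products in a cluster generalized Cohn triple `(P,Q,N)`
with parities `(α,β,γ)`. -/
theorem trace_of_cohn_product {R : Type*} [CommRing R] (M α β γ : R)
    (P Q N : Matrix (Fin 2) (Fin 2) R)
    (hPdet : P.det = 1) (hNdet : N.det = 1)
    (htrP : P.trace = M * P 0 1 - α) (htrN : N.trace = M * N 0 1 - γ)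
    (hQ : Q = P * N - Smat M β) :
    (P * Q - Smat M γ).trace = P.trace * Q.trace - N.trace - α * β - 2 * γ ∧
    (Q * N - Smat M α).trace = Q.trace * N.trace - P.trace - β * γ - 2 * α := by
  have htrQ : Q.trace = (P * N).trace - 2 * β := by
    rw [hQ, trace_sub, trace_Smat]
  constructor
  · rw [htrQ, hQ, Matrix.mul_sub, trace_sub, trace_sub, trace_mul_mul_self_left,
      trace_mul_Smat, trace_Smat, hPdet]
    linear_combination β * htrP
  · rw [htrQ, hQ, Matrix.sub_mul, trace_sub, trace_sub, trace_mul_mul_self_right,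
      trace_Smat_mul, trace_Smat, hNdet]
    linear_combination β * htrN
end

section
/- Let R be a commutative ring and let 𝓜, g, k ∈ R. (1) If X is a 2×2 matrix over R with det(X) = 1 and tr(X) = −k, then det(ψ_g(X)) = 1, the (1,2)-entry of ψ_g(X) equals X₁₂, and tr(ψ_g(X)) = 𝓜·X₁₂ − k. (2) If P is a 2×2 matrix over R with det(P) = 1 and tr(P) = 𝓜·P₁₂ − k, then det(ψ_g⁻¹(P)) = 1, the (1,2)-entry of ψ_g⁻¹(P) equals P₁₂, and tr(ψ_g⁻¹(P)) = −k. Moreover, ψ_g⁻¹(ψ_g(X)) = X and ψ_g(ψ_g⁻¹(P)) = P for all 2×2 matrices X, P over R; in particular ψ_g is a bijection between the set of matrices with det 1 and trace −k whose (1,2)-entry is a and the set of matrices with det 1 and trace 𝓜·a − k whose (1,2)-entry is a. -/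
/-!
The map `A ↦ A'` is the reflection of a `2 × 2` matrix in its anti-diagonal. It reverses
products and preserves the determinant, the trace and the `(1,2)`-entry, and it fixes every
`L(u)`; moreover `u ↦ L(u)` turns addition into multiplication. Hence
`ψ_g⁻¹(ψ_g(A)) = L(-g) L(g) A L(𝓜-g) L(g-𝓜) = A`, and symmetrically. Finally `ψ_g` keeps the
`(1,2)`-entry and the determinant, and by cyclicity its trace is `tr(A' L(𝓜)) = tr A + 𝓜 A₁₂`.
-/

open Matrix

/-- The lower-triangular matrix `L(u) = [[1,0],[u,1]]`. -/
def Lmat {R : Type*} [CommRing R] (u : R) : Matrix (Fin 2) (Fin 2) R :=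
  !![1, 0; u, 1]

/-- The matrix obtained from `A` by swapping its two diagonal entries. -/
def swapDiag {R : Type*} [CommRing R] (A : Matrix (Fin 2) (Fin 2) R) :
    Matrix (Fin 2) (Fin 2) R :=
  !![A 1 1, A 0 1; A 1 0, A 0 0]

/-- The map `ψ_g(A) = L(𝓜−g)·A'·L(g)`. -/
def psi {R : Type*} [CommRing R] (M g : R) (A : Matrix (Fin 2) (Fin 2) R) :
    Matrix (Fin 2) (Fin 2) R :=
  Lmat (M - g) * swapDiag A * Lmat g

/-- The map `ψ_g⁻¹(A) = L(−g)·A'·L(−(𝓜−g))`. -/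
def psiInv {R : Type*} [CommRing R] (M g : R) (A : Matrix (Fin 2) (Fin 2) R) :
    Matrix (Fin 2) (Fin 2) R :=
  Lmat (-g) * swapDiag A * Lmat (-(M - g))

section

variable {R : Type*} [CommRing R]

theorem Lmat_zero : Lmat (0 : R) = 1 := by
  rw [Lmat, one_fin_two]

theorem Lmat_mul_Lmat (u v : R) : Lmat u * Lmat v = Lmat (u + v) := by
  rw [Lmat, Lmat, Lmat, mul_fin_two]
  simp

theorem det_Lmat (u : R) : (Lmat u).det = 1 := by
  simp [Lmat, det_fin_two_of]

theorem Lmat_mul_mul_Lmat_apply_zero_one (u v : R) (A : Matrix (Fin 2) (Fin 2) R) :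
    (Lmat u * A * Lmat v) 0 1 = A 0 1 := by
  simp only [mul_apply, Fin.sum_univ_two]
  simp [Lmat]

theorem trace_mul_Lmat (u : R) (A : Matrix (Fin 2) (Fin 2) R) :
    (A * Lmat u).trace = A.trace + u * A 0 1 := by
  simp only [Lmat, trace_fin_two, mul_apply, Fin.sum_univ_two, of_apply, cons_val', cons_val_zero,
    cons_val_one, empty_val', cons_val_fin_one]
  ring

theorem trace_Lmat_mul_mul_Lmat (u v : R) (A : Matrix (Fin 2) (Fin 2) R) :
    (Lmat u * A * Lmat v).trace = A.trace + (u + v) * A 0 1 := by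
  rw [mul_assoc, trace_mul_comm, mul_assoc, Lmat_mul_Lmat, trace_mul_Lmat, add_comm v]

theorem swapDiag_mul (A B : Matrix (Fin 2) (Fin 2) R) :
    swapDiag (A * B) = swapDiag B * swapDiag A := by
  ext i j
  fin_cases i <;> fin_cases j <;> simp [swapDiag, mul_apply, Fin.sum_univ_two] <;> ring

theorem swapDiag_swapDiag (A : Matrix (Fin 2) (Fin 2) R) : swapDiag (swapDiag A) = A := by
  ext i j
  fin_cases i <;> fin_cases j <;> rfl

theorem swapDiag_Lmat (u : R) : swapDiag (Lmat u) = Lmat u := by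
  ext i j
  fin_cases i <;> fin_cases j <;> rfl

theorem det_swapDiag (A : Matrix (Fin 2) (Fin 2) R) : (swapDiag A).det = A.det := by
  rw [swapDiag, det_fin_two_of, det_fin_two]
  ring

theorem trace_swapDiag (A : Matrix (Fin 2) (Fin 2) R) : (swapDiag A).trace = A.trace := by
  rw [swapDiag, trace_fin_two_of, trace_fin_two]
  ring

theorem swapDiag_apply_zero_one (A : Matrix (Fin 2) (Fin 2) R) : swapDiag A 0 1 = A 0 1 :=
  rfl

variable (M g : R) (A : Matrix (Fin 2) (Fin 2) R)

theorem det_psi : (psi M g A).det = A.det := by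
  rw [psi, det_mul, det_mul, det_Lmat, det_Lmat, det_swapDiag, one_mul, mul_one]

theorem det_psiInv : (psiInv M g A).det = A.det := by
  rw [psiInv, det_mul, det_mul, det_Lmat, det_Lmat, det_swapDiag, one_mul, mul_one]

theorem psi_apply_zero_one : psi M g A 0 1 = A 0 1 :=
  Lmat_mul_mul_Lmat_apply_zero_one _ _ _

theorem psiInv_apply_zero_one : psiInv M g A 0 1 = A 0 1 :=
  Lmat_mul_mul_Lmat_apply_zero_one _ _ _

theorem trace_psi : (psi M g A).trace = A.trace + M * A 0 1 := by
  rw [psi, trace_Lmat_mul_mul_Lmat, trace_swapDiag, swapDiag_apply_zero_one, sub_add_cancel]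

theorem trace_psiInv : (psiInv M g A).trace = A.trace - M * A 0 1 := by
  rw [psiInv, trace_Lmat_mul_mul_Lmat, trace_swapDiag, swapDiag_apply_zero_one]
  ring

theorem psiInv_psi : psiInv M g (psi M g A) = A := by
  simp only [psiInv, psi, swapDiag_mul, swapDiag_swapDiag, swapDiag_Lmat, ← mul_assoc,
    Lmat_mul_Lmat, neg_add_cancel, Lmat_zero, one_mul]
  rw [mul_assoc, Lmat_mul_Lmat, add_neg_cancel, Lmat_zero, mul_one]

theorem psi_psiInv : psi M g (psiInv M g A) = A := by
  simp only [psiInv, psi, swapDiag_mul, swapDiag_swapDiag, swapDiag_Lmat, ← mul_assoc,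
    Lmat_mul_Lmat, add_neg_cancel, Lmat_zero, one_mul]
  rw [mul_assoc, Lmat_mul_Lmat, neg_add_cancel, Lmat_zero, mul_one]

end

/-- `ψ_g` carries cluster Markov-monodromy matrices to cluster generalized Cohn
matrices and `ψ_g⁻¹` is its inverse; in particular `ψ_g` is a bijection between
the two sets of matrices with fixed `(1,2)`-entry. -/
theorem psi_bijection {R : Type*} [CommRing R] (M g k : R) :
    (∀ X : Matrix (Fin 2) (Fin 2) R, X.det = 1 → X.trace = -k →
      (psi M g X).det = 1 ∧ (psi M g X) 0 1 = X 0 1 ∧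
        (psi M g X).trace = M * X 0 1 - k) ∧
    (∀ P : Matrix (Fin 2) (Fin 2) R, P.det = 1 → P.trace = M * P 0 1 - k →
      (psiInv M g P).det = 1 ∧ (psiInv M g P) 0 1 = P 0 1 ∧
        (psiInv M g P).trace = -k) ∧
    (∀ A : Matrix (Fin 2) (Fin 2) R, psiInv M g (psi M g A) = A) ∧
    (∀ A : Matrix (Fin 2) (Fin 2) R, psi M g (psiInv M g A) = A) ∧
    (∀ a : R, Set.BijOn (psi M g)
      {A : Matrix (Fin 2) (Fin 2) R | A.det = 1 ∧ A.trace = -k ∧ A 0 1 = a}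
      {A : Matrix (Fin 2) (Fin 2) R | A.det = 1 ∧ A.trace = M * a - k ∧ A 0 1 = a}) := by
  have to_cohn : ∀ X : Matrix (Fin 2) (Fin 2) R, X.det = 1 → X.trace = -k →
      (psi M g X).det = 1 ∧ (psi M g X) 0 1 = X 0 1 ∧
        (psi M g X).trace = M * X 0 1 - k := fun X hdet htr =>
    ⟨by rw [det_psi, hdet], psi_apply_zero_one M g X,
      by rw [trace_psi, htr]; ring⟩
  have to_markov : ∀ P : Matrix (Fin 2) (Fin 2) R, P.det = 1 → P.trace = M * P 0 1 - k →
      (psiInv M g P).det = 1 ∧ (psiInv M g P) 0 1 = P 0 1 ∧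
        (psiInv M g P).trace = -k := fun P hdet htr =>
    ⟨by rw [det_psiInv, hdet], psiInv_apply_zero_one M g P,
      by rw [trace_psiInv, htr]; ring⟩
  refine ⟨to_cohn, to_markov, psiInv_psi M g, psi_psiInv M g, fun a => ?_⟩
  refine Set.InvOn.bijOn ⟨fun X _ => psiInv_psi M g X, fun P _ => psi_psiInv M g P⟩ ?_ ?_
  · rintro X ⟨hdet, htr, rfl⟩
    obtain ⟨hdet', hentry, htr'⟩ := to_cohn X hdet htr
    exact ⟨hdet', htr', hentry⟩
  · rintro P ⟨hdet, htr, rfl⟩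
    obtain ⟨hdet', hentry, htr'⟩ := to_markov P hdet htr
    exact ⟨hdet', htr', hentry⟩
end

section
/- Let R be a commutative ring and let 𝓜, g, β ∈ R. Let P, Q, N be 2×2 matrices over R with det(P) = det(Q) = det(N) = 1, tr(Q) = 𝓜·Q₁₂ − β, and Q = P·N − S(β). Then ψ_g⁻¹(P)·ψ_g⁻¹(Q)·ψ_g⁻¹(N) = T. -/
open Matrix

/-- The matrix `T = [[−1, 0], [𝓜, −1]]`. -/
def Tmat {R : Type*} [CommRing R] (M : R) : Matrix (Fin 2) (Fin 2) R :=
  !![-1, 0; M, -1]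

/-
Write `D = diag(1, -1)`. Swapping the diagonal of a `2 × 2` matrix is `A ↦ D·adj(A)·D`, so
`ψ_g⁻¹(A) = X·adj(A)·Y` with `X = L(-g)·D` and `Y = D·L(g - 𝓜)`. Since `Y·X = L(𝓜)`, the product
of three images is `X·(adj P·L(𝓜)·adj Q·L(𝓜)·adj N)·Y`. The trace condition on `Q` says exactly
that `L(𝓜)·adj(Q)·L(𝓜) = -(Q + S(β)) = -P·N`, so the middle factor is `-det P·det N = -1`,
leaving `-X·Y = -L(-𝓜) = T`.
-/

section

variable {R : Type*} [CommRing R]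

def diagSign : Matrix (Fin 2) (Fin 2) R := diagonal ![1, -1]

theorem diagSign_mul_diagSign : (diagSign * diagSign : Matrix (Fin 2) (Fin 2) R) = 1 := by
  ext i j; fin_cases i <;> fin_cases j <;> simp [diagSign]

theorem swapDiag_eq_diagSign_mul_adjugate_mul_diagSign (A : Matrix (Fin 2) (Fin 2) R) :
    swapDiag A = diagSign * A.adjugate * diagSign := by
  ext i j; fin_cases i <;> fin_cases j <;> simp [swapDiag, diagSign, adjugate_fin_two]

theorem diagSign_mul_Lmat_mul_diagSign (u : R) :
    diagSign * Lmat u * diagSign = Lmat (-u) := by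
  ext i j; fin_cases i <;> fin_cases j <;> simp [diagSign, Lmat]

theorem Lmat_mul_adjugate_mul_Lmat {M β : R} {Q : Matrix (Fin 2) (Fin 2) R}
    (htrQ : Q.trace = M * Q 0 1 - β) :
    Lmat M * Q.adjugate * Lmat M = -(Q + Smat M β) := by
  rw [trace_fin_two] at htrQ
  ext i j
  fin_cases i <;> fin_cases j <;> simp [Lmat, Smat, adjugate_fin_two]
  · linear_combination htrQ
  · linear_combination M * htrQ
  · linear_combination htrQ

theorem psiInv_mul_psiInv_mul_psiInv (M g : R) (A B C : Matrix (Fin 2) (Fin 2) R) :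
    psiInv M g A * psiInv M g B * psiInv M g C =
      Lmat (-g) * diagSign * (A.adjugate * (Lmat M * B.adjugate * Lmat M) * C.adjugate) *
        diagSign * Lmat (-(M - g)) := by
  have hYX : diagSign * Lmat (-(M - g)) * (Lmat (-g) * diagSign) = Lmat M := by
    rw [← mul_assoc, mul_assoc diagSign, Lmat_mul_Lmat, diagSign_mul_Lmat_mul_diagSign]
    congr 1; ring
  simp only [psiInv, swapDiag_eq_diagSign_mul_adjugate_mul_diagSign, ← hYX, mul_assoc]

end

theorem psiInv_triple_general {R : Type*} [CommRing R] (M g β : R)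
    (P Q N : Matrix (Fin 2) (Fin 2) R)
    (hP : P.det = 1) (hN : N.det = 1)
    (htrQ : Q.trace = M * Q 0 1 - β)
    (hprod : Q = P * N - Smat M β) :
    psiInv M g P * psiInv M g Q * psiInv M g N = Tmat M := by
  have hmiddle : P.adjugate * (Lmat M * Q.adjugate * Lmat M) * N.adjugate = -1 := by
    rw [Lmat_mul_adjugate_mul_Lmat htrQ, hprod, sub_add_cancel]
    calc P.adjugate * -(P * N) * N.adjugate = -(P.adjugate * P * (N * N.adjugate)) := by
          noncomm_ring
      _ = -1 := by rw [adjugate_mul, mul_adjugate, hP, hN]; simp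
  rw [psiInv_mul_psiInv_mul_psiInv, hmiddle, mul_neg_one, neg_mul, mul_assoc,
    diagSign_mul_diagSign, mul_one, neg_mul, Lmat_mul_Lmat]
  ext i j; fin_cases i <;> fin_cases j <;> simp [Lmat, Tmat]

/-- `ψ_g⁻¹` carries a cluster generalized Cohn triple (`Q = P·N − S(β)`) to a
cluster Markov-monodromy triple (`ψ_g⁻¹(P)·ψ_g⁻¹(Q)·ψ_g⁻¹(N) = T`). -/
theorem psiInv_triple {R : Type*} [CommRing R] (M g β : R)
    (P Q N : Matrix (Fin 2) (Fin 2) R)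
    (hP : P.det = 1) (hQ : Q.det = 1) (hN : N.det = 1)
    (htrQ : Q.trace = M * Q 0 1 - β)
    (hprod : Q = P * N - Smat M β) :
    psiInv M g P * psiInv M g Q * psiInv M g N = Tmat M :=
  psiInv_triple_general M g β P Q N hP hN htrQ hprod
end

section
/- Let R be a commutative ring and let 𝓜, α, γ ∈ R. Let X, Y, Z be 2×2 matrices over R with det(X) = det(Y) = det(Z) = 1, X·Y·Z = T, tr(X) = −α, and tr(Z) = −γ. Then −(X·(Z⁻¹·Y·Z))⁻¹ = (Y·Z)⁻¹·(X·Z)⁻¹ − S(γ) and −((X·Y·X⁻¹)·Z)⁻¹ = (X·Z)⁻¹·(X·Y)⁻¹ − S(α). -/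
open Matrix

/-!
Both identities reduce to the Cayley–Hamilton relation `A⁻¹ + A = tr(A) • 1` for a `2 × 2`
matrix of determinant one. For the first child, the two sides differ by
`Z⁻¹ Y⁻¹ (Z⁻¹ + Z) X⁻¹ = -γ • (XYZ)⁻¹ = -γ • T⁻¹`, and for the second by
`Z⁻¹ (X⁻¹ + X) Y⁻¹ X⁻¹ = -α • T⁻¹`; finally `-k • T⁻¹ = S(k)`.
-/

section

variable {R : Type*} [CommRing R]

theorem Matrix.inv_add_self_of_det_eq_one {A : Matrix (Fin 2) (Fin 2) R} (hA : A.det = 1) :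
    A⁻¹ + A = A.trace • (1 : Matrix (Fin 2) (Fin 2) R) := by
  rw [inv_def, hA, Ring.inverse_one, one_smul, adjugate_fin_two]
  ext i j
  fin_cases i <;> fin_cases j <;> simp [trace_fin_two, add_comm]

theorem Matrix.inv_mul_inv_mul_inv {n : Type*} [Fintype n] [DecidableEq n]
    (X Y Z : Matrix n n R) :
    Z⁻¹ * Y⁻¹ * X⁻¹ = (X * Y * Z)⁻¹ := by
  rw [Matrix.mul_inv_rev, Matrix.mul_inv_rev, mul_assoc]

theorem neg_smul_Tmat_inv (M k : R) : (-k) • (Tmat M)⁻¹ = Smat M k := by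
  have hdet : (Tmat M).det = 1 := by simp [Tmat, det_fin_two_of]
  rw [inv_def, hdet, Ring.inverse_one, one_smul, Tmat, adjugate_fin_two_of, Smat]
  ext i j
  fin_cases i <;> fin_cases j <;> simp [mul_comm]

variable {M α γ : R} {X Y Z : Matrix (Fin 2) (Fin 2) R}

theorem neg_inv_mul_conj_eq (hZ : Z.det = 1) (hT : X * Y * Z = Tmat M)
    (htrZ : Z.trace = -γ) :
    -(X * (Z⁻¹ * Y * Z))⁻¹ = (Y * Z)⁻¹ * (X * Z)⁻¹ - Smat M γ := by
  have hZZ : Z⁻¹⁻¹ = Z := nonsing_inv_nonsing_inv Z (hZ ▸ isUnit_one)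
  have hS : Z⁻¹ * Y⁻¹ * (Z⁻¹ + Z) * X⁻¹ = Smat M γ := by
    rw [inv_add_self_of_det_eq_one hZ, htrZ, Matrix.mul_smul, smul_mul_assoc, mul_one,
      inv_mul_inv_mul_inv, hT, neg_smul_Tmat_inv]
  simp only [Matrix.mul_inv_rev, hZZ, ← hS]
  noncomm_ring

theorem neg_inv_conj_mul_eq (hX : X.det = 1) (hT : X * Y * Z = Tmat M)
    (htrX : X.trace = -α) :
    -((X * Y * X⁻¹) * Z)⁻¹ = (X * Z)⁻¹ * (X * Y)⁻¹ - Smat M α := by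
  have hXX : X⁻¹⁻¹ = X := nonsing_inv_nonsing_inv X (hX ▸ isUnit_one)
  have hS : Z⁻¹ * (X⁻¹ + X) * (Y⁻¹ * X⁻¹) = Smat M α := by
    rw [inv_add_self_of_det_eq_one hX, htrX, Matrix.mul_smul, smul_mul_assoc, mul_one,
      ← mul_assoc, inv_mul_inv_mul_inv, hT, neg_smul_Tmat_inv]
  simp only [Matrix.mul_inv_rev, hXX, ← hS]
  noncomm_ring

end

theorem mm_decomposition_propagation_general {R : Type*} [CommRing R] (M α γ : R)
    (X Y Z : Matrix (Fin 2) (Fin 2) R)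
    (hX : X.det = 1) (hZ : Z.det = 1)
    (hT : X * Y * Z = Tmat M)
    (htrX : X.trace = -α) (htrZ : Z.trace = -γ) :
    -(X * (Z⁻¹ * Y * Z))⁻¹ = (Y * Z)⁻¹ * (X * Z)⁻¹ - Smat M γ ∧
    -((X * Y * X⁻¹) * Z)⁻¹ = (X * Z)⁻¹ * (X * Y)⁻¹ - Smat M α :=
  ⟨neg_inv_mul_conj_eq hZ hT htrZ, neg_inv_conj_mul_eq hX hT htrX⟩

/-- If `(X,Y,Z)` is a Markov-monodromy decomposition of the cluster generalized Cohn
triple `(−(YZ)⁻¹, −(XZ)⁻¹, −(XY)⁻¹)`, then `(X, Z, Z⁻¹YZ)` and `(XYX⁻¹, X, Z)` are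
Markov-monodromy decompositions of the two children triples. -/
theorem mm_decomposition_propagation {R : Type*} [CommRing R] (M α γ : R)
    (X Y Z : Matrix (Fin 2) (Fin 2) R)
    (hX : X.det = 1) (hY : Y.det = 1) (hZ : Z.det = 1)
    (hT : X * Y * Z = Tmat M)
    (htrX : X.trace = -α) (htrZ : Z.trace = -γ) :
    -(X * (Z⁻¹ * Y * Z))⁻¹ = (Y * Z)⁻¹ * (X * Z)⁻¹ - Smat M γ ∧
    -((X * Y * X⁻¹) * Z)⁻¹ = (X * Z)⁻¹ * (X * Y)⁻¹ - Smat M α :=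
  mm_decomposition_propagation_general M α γ X Y Z hX hZ hT htrX htrZ
end

section
/- Let F be the field of rational functions ℚ(x₁,x₂,x₃), let k₁, k₂, k₃ be natural numbers regarded in F, let f ∈ F, and set 𝓜 := (x₁² + x₂² + x₃² + k₁x₂x₃ + k₂x₁x₃ + k₃x₁x₂)/(x₁x₂x₃). Define 2×2 matrices over F: P with first row (f, x₁), P₂₂ := (−f·x₂x₃ + k₂x₁x₃ + k₃x₁x₂ + x₁² + x₂² + x₃²)/(x₂x₃) and P₂₁ := (f·P₂₂ − 1)/x₁; Q with Q₁₁ := (f·x₂ + k₁x₂ + x₃)/x₁, Q₁₂ := x₂, Q₂₂ := (−f·x₂x₃ + k₃x₁x₂ + x₁² + x₂²)/(x₁x₃) and Q₂₁ := (Q₁₁·Q₂₂ − 1)/x₂; R with R₁₁ := (f·x₂x₃ + k₁x₂x₃ + k₂x₁x₃ + x₁² + x₃²)/(x₁x₂), R₁₂ := x₃, R₂₂ := (−f·x₂x₃ + x₂²)/(x₁x₂) and R₂₁ := (R₁₁·R₂₂ − 1)/x₃. Then det(P) = det(Q) = det(R) = 1, tr(P) = 𝓜·x₁ − k₁, tr(Q)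 = 𝓜·x₂ − k₂, tr(R) = 𝓜·x₃ − k₃, and Q = P·R − S(k₂), where S(k₂) is the matrix with rows (k₂, 0) and (k₂·𝓜, k₂). -/
open Matrix

noncomputable section

/-- The field of rational functions `ℚ(x₁,x₂,x₃)`. -/
abbrev RatFunc3 : Type := FractionRing (MvPolynomial (Fin 3) ℚ)

/-- The variable `x₁`. -/
def x₁ : RatFunc3 := algebraMap (MvPolynomial (Fin 3) ℚ) RatFunc3 (MvPolynomial.X 0)

/-- The variable `x₂`. -/
def x₂ : RatFunc3 := algebraMap (MvPolynomial (Fin 3) ℚ) RatFunc3 (MvPolynomial.X 1)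

/-- The variable `x₃`. -/
def x₃ : RatFunc3 := algebraMap (MvPolynomial (Fin 3) ℚ) RatFunc3 (MvPolynomial.X 2)

/-- The `(k₁,k₂,k₃)`-generalized Markov invariant `𝓜`. -/
def MInv (k₁ k₂ k₃ : ℕ) : RatFunc3 :=
  (x₁ ^ 2 + x₂ ^ 2 + x₃ ^ 2 + k₁ * x₂ * x₃ + k₂ * x₁ * x₃ + k₃ * x₁ * x₂) /
    (x₁ * x₂ * x₃)

/-- The matrix `P_id(f)`. -/
def Pid (k₂ k₃ : ℕ) (f : RatFunc3) : Matrix (Fin 2) (Fin 2) RatFunc3 :=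
  let P₂₂ : RatFunc3 :=
    (-f * x₂ * x₃ + k₂ * x₁ * x₃ + k₃ * x₁ * x₂ + x₁ ^ 2 + x₂ ^ 2 + x₃ ^ 2) /
      (x₂ * x₃)
  !![f, x₁; (f * P₂₂ - 1) / x₁, P₂₂]

/-- The matrix `Q_id(f)`. -/
def Qid (k₁ k₃ : ℕ) (f : RatFunc3) : Matrix (Fin 2) (Fin 2) RatFunc3 :=
  let Q₁₁ : RatFunc3 := (f * x₂ + k₁ * x₂ + x₃) / x₁
  let Q₂₂ : RatFunc3 := (-f * x₂ * x₃ + k₃ * x₁ * x₂ + x₁ ^ 2 + x₂ ^ 2) / (x₁ * x₃)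
  !![Q₁₁, x₂; (Q₁₁ * Q₂₂ - 1) / x₂, Q₂₂]

/-- The matrix `R_id(f)`. -/
def Rid (k₁ k₂ : ℕ) (f : RatFunc3) : Matrix (Fin 2) (Fin 2) RatFunc3 :=
  let R₁₁ : RatFunc3 :=
    (f * x₂ * x₃ + k₁ * x₂ * x₃ + k₂ * x₁ * x₃ + x₁ ^ 2 + x₃ ^ 2) / (x₁ * x₂)
  let R₂₂ : RatFunc3 := (-f * x₂ * x₃ + x₂ ^ 2) / (x₁ * x₂)
  !![R₁₁, x₃; (R₁₁ * R₂₂ - 1) / x₃, R₂₂]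

/-- The matrix `S(k₂) = [[k₂, 0], [k₂·𝓜, k₂]]`. -/
def Sk₂ (k₁ k₂ k₃ : ℕ) : Matrix (Fin 2) (Fin 2) RatFunc3 :=
  !![(k₂ : RatFunc3), 0; k₂ * MInv k₁ k₂ k₃, k₂]

/-!
Each of `P`, `Q`, `R` has the shape `!![a, b; (a * d - 1) / b, d]` with `b` one of the
nonzero variables, so its determinant is `1` by construction. The trace formulas and
`Q = P R - S` are identities of rational functions, which hold after clearing the
denominators, all monomials in `x₁, x₂, x₃`.
-/

theorem IsFractionRing.algebraMap_X_ne_zero {σ R K : Type*} [CommRing R] [IsDomain R]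
    [CommRing K] [Algebra (MvPolynomial σ R) K] [IsFractionRing (MvPolynomial σ R) K] (i : σ) :
    algebraMap (MvPolynomial σ R) K (MvPolynomial.X i) ≠ 0 :=
  (map_ne_zero_iff _ (IsFractionRing.injective _ K)).mpr (MvPolynomial.X_ne_zero i)

@[simp]
theorem x₁_ne_zero : x₁ ≠ 0 := IsFractionRing.algebraMap_X_ne_zero 0

@[simp]
theorem x₂_ne_zero : x₂ ≠ 0 := IsFractionRing.algebraMap_X_ne_zero 1

@[simp]
theorem x₃_ne_zero : x₃ ≠ 0 := IsFractionRing.algebraMap_X_ne_zero 2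

theorem Matrix.det_fin_two_of_div {K : Type*} [Field K] {b : K} (hb : b ≠ 0) (a d : K) :
    !![a, b; (a * d - 1) / b, d].det = 1 := by
  rw [det_fin_two_of]
  field_simp
  ring

theorem Pid_det (k₂ k₃ : ℕ) (f : RatFunc3) : (Pid k₂ k₃ f).det = 1 :=
  det_fin_two_of_div x₁_ne_zero _ _

theorem Qid_det (k₁ k₃ : ℕ) (f : RatFunc3) : (Qid k₁ k₃ f).det = 1 :=
  det_fin_two_of_div x₂_ne_zero _ _

theorem Rid_det (k₁ k₂ : ℕ) (f : RatFunc3) : (Rid k₁ k₂ f).det = 1 :=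
  det_fin_two_of_div x₃_ne_zero _ _

theorem Pid_trace (k₁ k₂ k₃ : ℕ) (f : RatFunc3) :
    (Pid k₂ k₃ f).trace = MInv k₁ k₂ k₃ * x₁ - k₁ := by
  rw [Pid, trace_fin_two_of, MInv]
  field_simp
  ring

theorem Qid_trace (k₁ k₂ k₃ : ℕ) (f : RatFunc3) :
    (Qid k₁ k₃ f).trace = MInv k₁ k₂ k₃ * x₂ - k₂ := by
  rw [Qid, trace_fin_two_of, MInv]
  field_simp
  ring

theorem Rid_trace (k₁ k₂ k₃ : ℕ) (f : RatFunc3) :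
    (Rid k₁ k₂ f).trace = MInv k₁ k₂ k₃ * x₃ - k₃ := by
  rw [Rid, trace_fin_two_of, MInv]
  field_simp
  ring

theorem Qid_eq_Pid_mul_Rid_sub_Sk₂ (k₁ k₂ k₃ : ℕ) (f : RatFunc3) :
    Qid k₁ k₃ f = Pid k₂ k₃ f * Rid k₁ k₂ f - Sk₂ k₁ k₂ k₃ := by
  rw [Pid, Rid, mul_fin_two]
  ext i j
  fin_cases i <;> fin_cases j <;>
    simp only [Qid, Sk₂, MInv, Matrix.sub_apply, of_apply, cons_val', cons_val_zero,
      cons_val_one, cons_val_fin_one, Fin.zero_eta, Fin.mk_one] <;>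
    field_simp <;> ring

/-- The explicit matrices `(P_id(f), Q_id(f), R_id(f))` form a
`(k₁,k₂,k₃)`-cluster generalized Cohn triple associated with the initial cluster
`(x₁, x₂, x₃)`. -/
theorem initial_cohn_triple (k₁ k₂ k₃ : ℕ) (f : RatFunc3) :
    (Pid k₂ k₃ f).det = 1 ∧ (Qid k₁ k₃ f).det = 1 ∧ (Rid k₁ k₂ f).det = 1 ∧
    (Pid k₂ k₃ f).trace = MInv k₁ k₂ k₃ * x₁ - k₁ ∧
    (Qid k₁ k₃ f).trace = MInv k₁ k₂ k₃ * x₂ - k₂ ∧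
    (Rid k₁ k₂ f).trace = MInv k₁ k₂ k₃ * x₃ - k₃ ∧
    Qid k₁ k₃ f = Pid k₂ k₃ f * Rid k₁ k₂ f - Sk₂ k₁ k₂ k₃ :=
  ⟨Pid_det k₂ k₃ f, Qid_det k₁ k₃ f, Rid_det k₁ k₂ f, Pid_trace k₁ k₂ k₃ f,
    Qid_trace k₁ k₂ k₃ f, Rid_trace k₁ k₂ k₃ f, Qid_eq_Pid_mul_Rid_sub_Sk₂ k₁ k₂ k₃ f⟩

end
end

section
/- Let P₁ and P₂ be weighted fence posets with chronological orderings on h₁ and h₂ elements, with weight functions wt₁ and wt₂ taking values in a commutative ring R. Let P₃₄ be the weighted fence poset on {1, …, h₁+h₂} whose order is generated by the generating relations of P₁ on {1,…,h₁}, the generating relations of P₂ shifted to {h₁+1,…,h₁+h₂}, and the additional relation h₁ < h₁+1, with weights inherited from P₁ and P₂. Let u be the largest index with 1 ≤ u < h₁ such that u is not greater than h₁ in the order of P₁, taking u = 0 if no such index exists; let v be the smallest index with 1 < v ≤ h₂ such that v is not less than 1 in the order of P₂, taking v = h₂+1 if no such index exists. Set Z := ∏_{i=1}^{v−1} wt₂(i).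 Then W(P₁)·W(P₂) = W(P₃₄) + Z·W(P₁[1,u])·W(P₂[v,h₂]). -/
/-!
Split the pairs `(I₁, I₂)` of lower sets of `P₁` and `P₂` according to whether
`1 ∈ I₂ → h₁ ∈ I₁`. The pairs satisfying it are exactly the lower sets `I₁ ∪ (I₂ + h₁)` of the
grafted fence, the new relation `h₁ < h₁ + 1` being this very condition. For the others,
`h₁ ∉ I₁` forces `I₁ ⊆ {1, …, u}` since every element of `(u, h₁)` lies above `h₁`, and
`1 ∈ I₂` forces `{1, …, v - 1} ⊆ I₂` since each of these lies below `1`. As the fences rise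
from `u` to `u + 1` and from `v - 1` to `v`, what remains is an arbitrary lower set of `P₁[1, u]`
and of `P₂[v, h₂]`, which produces the correction term `Z · W(P₁[1, u]) · W(P₂[v, h₂])`.
-/

open Finset

/-- The generating relation of a fence poset with chronological ordering on indices
`lo, …, hi`: for each `lo ≤ i < hi`, `up i = true` encodes the generating relation
`i < i+1` and `up i = false` encodes the generating relation `i > i+1`. -/
def fenceGen (lo hi : ℕ) (up : ℕ → Bool) (x y : ℕ) : Prop :=
  ∃ i, lo ≤ i ∧ i + 1 ≤ hi ∧
    ((up i = true ∧ x = i ∧ y = i + 1) ∨ (up i = false ∧ x = i + 1 ∧ y = i))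

/-- The partial order generated by a generating relation `G` (its
reflexive–transitive closure). -/
def genLE (G : ℕ → ℕ → Prop) : ℕ → ℕ → Prop :=
  Relation.ReflTransGen G

/-- `I` is a lower set (order ideal) for the order generated by `G`. -/
def IsIdeal (G : ℕ → ℕ → Prop) (I : Finset ℕ) : Prop :=
  ∀ x y, y ∈ I → genLE G x y → x ∈ I

open Classical in
/-- The weight generating function of order ideals: the sum, over all lower sets `I`
of the poset on ground set `S` with order generated by `G`, of `∏ x ∈ I, wt x`. -/
noncomputable def W {R : Type*} [CommRing R] (S : Finset ℕ) (G : ℕ → ℕ → Prop)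
    (wt : ℕ → R) : R :=
  ∑ I ∈ S.powerset, if IsIdeal G I then ∏ x ∈ I, wt x else 0

/-- The `up`-data of the grafting `P₁ ↗ P₂` of two fence posets on `h₁` and `h₂`
elements: the relations of `P₁` on `{1,…,h₁}`, those of `P₂` shifted to
`{h₁+1,…,h₁+h₂}`, and the additional relation `h₁ < h₁+1`. -/
def graftUp (h₁ : ℕ) (up₁ up₂ : ℕ → Bool) (i : ℕ) : Bool :=
  if i < h₁ then up₁ i else if i = h₁ then true else up₂ (i - h₁)

/-- The weights of the grafting `P₁ ↗ P₂`, inherited from `P₁` and `P₂`. -/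
def graftWt {R : Type*} (h₁ : ℕ) (wt₁ wt₂ : ℕ → R) (i : ℕ) : R :=
  if i ≤ h₁ then wt₁ i else wt₂ (i - h₁)

theorem Finset.sum_filter_product_mul {α β R : Type*} [CommSemiring R] (s : Finset α)
    (t : Finset β) (p : α → Prop) (q : β → Prop) [DecidablePred p] [DecidablePred q]
    (f : α → R) (g : β → R) :
    ∑ x ∈ s ×ˢ t with p x.1 ∧ q x.2, f x.1 * g x.2 =
      (∑ a ∈ s with p a, f a) * ∑ b ∈ t with q b, g b := by
  rw [sum_mul_sum, filter_product, sum_product]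

theorem Finset.sum_powerset_union_of_disjoint {α M : Type*} [DecidableEq α] [AddCommMonoid M]
    {s t : Finset α} (hst : Disjoint s t) (f : Finset α → M) :
    ∑ u ∈ (s ∪ t).powerset, f u = ∑ p ∈ s.powerset ×ˢ t.powerset, f (p.1 ∪ p.2) := by
  symm
  refine sum_nbij' (fun p => p.1 ∪ p.2) (fun u => (u ∩ s, u ∩ t)) ?_ ?_ ?_ ?_ (fun _ _ => rfl) <;>
    simp only [mem_product, mem_powerset, Prod.forall, Prod.mk.injEq]
  · exact fun a b ⟨ha, hb⟩ => union_subset_union ha hb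
  · exact fun u _ => ⟨inter_subset_right, inter_subset_right⟩
  · rintro a b ⟨ha, hb⟩
    have := disjoint_left.1 hst
    constructor <;> ext x <;> grind
  · exact fun u hu => by rw [← inter_union_distrib_left, inter_eq_left.2 hu]

theorem Finset.sum_powerset_union_image {α M : Type*} [DecidableEq α] [AddCommMonoid M]
    {s t : Finset α} {g : α → α} (hg : Set.InjOn g t) (hst : Disjoint s (t.image g))
    (f : Finset α → M) :
    ∑ u ∈ (s ∪ t.image g).powerset, f u =
      ∑ p ∈ s.powerset ×ˢ t.powerset, f (p.1 ∪ p.2.image g) := by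
  rw [sum_powerset_union_of_disjoint hst, sum_product, sum_product, powerset_image]
  exact sum_congr rfl fun a _ => sum_image fun x hx y hy =>
    image_injOn_powerset_of_injOn hg hx hy

section Ideals

variable {G G' : ℕ → ℕ → Prop} {I : Finset ℕ}

theorem isIdeal_iff_forall_gen : IsIdeal G I ↔ ∀ x y, y ∈ I → G x y → x ∈ I := by
  refine ⟨fun h x y hy hxy => h x y hy (.single hxy), fun h x y hy hxy => ?_⟩
  induction hxy using Relation.ReflTransGen.head_induction_on with
  | refl => exact hy
  | head hab _ ih => exact h _ _ ih hab

theorem IsIdeal.mono (hG : ∀ x y, G' x y → G x y) (hI : IsIdeal G I) : IsIdeal G' I :=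
  fun x y hy hxy => hI x y hy (Relation.ReflTransGen.mono hG x y hxy)

open Classical in
theorem W_eq_sum_filter {R : Type*} [CommRing R] (S : Finset ℕ) (G : ℕ → ℕ → Prop)
    (wt : ℕ → R) : W S G wt = ∑ I ∈ S.powerset with IsIdeal G I, ∏ x ∈ I, wt x :=
  (sum_filter _ _).symm

open Classical in
theorem W_mul_W {R : Type*} [CommRing R] (S T : Finset ℕ) (G H : ℕ → ℕ → Prop)
    (wt wt' : ℕ → R) :
    W S G wt * W T H wt' =
      ∑ p ∈ S.powerset ×ˢ T.powerset with IsIdeal G p.1 ∧ IsIdeal H p.2,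
        (∏ x ∈ p.1, wt x) * ∏ x ∈ p.2, wt' x := by
  rw [W_eq_sum_filter, W_eq_sum_filter, ← sum_filter_product_mul]

end Ideals

section Fence

variable {lo hi k : ℕ} {up : ℕ → Bool} {I J : Finset ℕ}

theorem isIdeal_fenceGen_iff :
    IsIdeal (fenceGen lo hi up) I ↔
      ∀ i, lo ≤ i → i + 1 ≤ hi →
        (up i = true → i + 1 ∈ I → i ∈ I) ∧ (up i = false → i ∈ I → i + 1 ∈ I) := by
  rw [isIdeal_iff_forall_gen]
  constructor
  · intro h i hlo hhi
    exact ⟨fun hup hi => h i (i + 1) hi ⟨i, hlo, hhi, .inl ⟨hup, rfl, rfl⟩⟩,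
      fun hup hi => h (i + 1) i hi ⟨i, hlo, hhi, .inr ⟨hup, rfl, rfl⟩⟩⟩
  · rintro h x y hy ⟨i, hlo, hhi, ⟨hup, rfl, rfl⟩ | ⟨hup, rfl, rfl⟩⟩
    · exact (h x hlo hhi).1 hup hy
    · exact (h y hlo hhi).2 hup hy

theorem up_eq_true_of_not_genLE (hlo : lo ≤ k) (hhi : k + 1 ≤ hi)
    (h : ¬ genLE (fenceGen lo hi up) (k + 1) k) : up k = true := by
  by_contra hup
  exact h (.single ⟨k, hlo, hhi, .inr ⟨eq_false_of_ne_true hup, rfl, rfl⟩⟩)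

theorem isIdeal_fenceGen_iff_of_subset_Icc (hk : k ≤ hi) (hup : lo ≤ k → up k = true)
    (hI : I ⊆ Icc lo k) : IsIdeal (fenceGen lo hi up) I ↔ IsIdeal (fenceGen lo k up) I := by
  refine ⟨IsIdeal.mono fun x y ⟨i, hlo, hhi, h⟩ => ⟨i, hlo, hhi.trans hk, h⟩, fun h => ?_⟩
  rw [isIdeal_fenceGen_iff] at h ⊢
  intro i hlo hhi
  have out : ∀ j, k < j → j ∉ I := fun j hj hjI => by have := mem_Icc.1 (hI hjI); omega
  rcases lt_trichotomy i k with hik | rfl | hik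
  · exact h i hlo (by omega)
  · refine ⟨fun _ hi => absurd hi (out _ (by omega)), fun hf _ => ?_⟩
    simp [hup hlo] at hf
  · exact ⟨fun _ hi => absurd hi (out _ (by omega)), fun _ hi => absurd hi (out i hik)⟩

theorem isIdeal_fenceGen_Icc_union_iff (hlo : lo ≤ k) (hup : k < hi → up k = true)
    (hJ : J ⊆ Icc (k + 1) hi) :
    IsIdeal (fenceGen lo hi up) (Icc lo k ∪ J) ↔ IsIdeal (fenceGen (k + 1) hi up) J := by
  have high : ∀ x, k < x → (x ∈ Icc lo k ∪ J ↔ x ∈ J) := fun x hx => by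
    simp only [mem_union, mem_Icc, or_iff_right (by omega : ¬ (lo ≤ x ∧ x ≤ k))]
  rw [isIdeal_fenceGen_iff, isIdeal_fenceGen_iff]
  constructor
  · intro h i hi hhi
    rw [← high i (by omega), ← high (i + 1) (by omega)]
    exact h i (by omega) hhi
  · intro h i hi hhi
    rcases lt_trichotomy i k with hik | rfl | hik
    · constructor <;> intros <;> simp only [mem_union, mem_Icc] <;> omega
    · refine ⟨fun _ _ => by simp only [mem_union, mem_Icc]; omega, fun hf _ => ?_⟩
      simp [hup (by omega)] at hf
    · rw [high i hik, high (i + 1) (by omega)]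
      exact h i hik hhi

end Fence

section Truncation

variable {R : Type*} [CommRing R] {lo hi k : ℕ} {up : ℕ → Bool}

open Classical in
theorem sum_isIdeal_notMem_eq_W (wt : ℕ → R) (hk : k < hi)
    (hreach : ∀ i, k < i → i < hi → genLE (fenceGen lo hi up) hi i)
    (hup : lo ≤ k → up k = true) :
    ∑ I ∈ (Icc lo hi).powerset with IsIdeal (fenceGen lo hi up) I ∧ hi ∉ I, ∏ x ∈ I, wt x =
      W (Icc lo k) (fenceGen lo k up) wt := by
  rw [W_eq_sum_filter]
  congr 1
  ext I
  simp only [mem_filter, mem_powerset]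
  constructor
  · rintro ⟨hI, hideal, htop⟩
    have hIk : I ⊆ Icc lo k := fun x hx => by
      obtain ⟨hlox, hxhi⟩ := mem_Icc.1 (hI hx)
      refine mem_Icc.2 ⟨hlox, not_lt.1 fun hkx => htop ?_⟩
      rcases hxhi.lt_or_eq with hxhi | rfl
      · exact hideal _ _ hx (hreach x hkx hxhi)
      · exact hx
    exact ⟨hIk, (isIdeal_fenceGen_iff_of_subset_Icc hk.le hup hIk).1 hideal⟩
  · rintro ⟨hIk, hideal⟩
    exact ⟨hIk.trans (Icc_subset_Icc_right hk.le),
      (isIdeal_fenceGen_iff_of_subset_Icc hk.le hup hIk).2 hideal,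
      fun h => by have := mem_Icc.1 (hIk h); omega⟩

open Classical in
theorem sum_isIdeal_mem_eq_mul_W (wt : ℕ → R) (hlo : lo ≤ k) (hk : k ≤ hi)
    (hreach : ∀ i, lo < i → i ≤ k → genLE (fenceGen lo hi up) i lo)
    (hup : k < hi → up k = true) :
    ∑ I ∈ (Icc lo hi).powerset with IsIdeal (fenceGen lo hi up) I ∧ lo ∈ I, ∏ x ∈ I, wt x =
      (∏ i ∈ Icc lo k, wt i) * W (Icc (k + 1) hi) (fenceGen (k + 1) hi up) wt := by
  have disjoint {J : Finset ℕ} (hJ : J ⊆ Icc (k + 1) hi) : Disjoint (Icc lo k) J :=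
    disjoint_left.2 fun x hx hxJ => by
      have := mem_Icc.1 hx; have := mem_Icc.1 (hJ hxJ); omega
  have bottom_subset {I : Finset ℕ} (hI : IsIdeal (fenceGen lo hi up) I) (hloI : lo ∈ I) :
      Icc lo k ⊆ I := fun x hx => by
    obtain ⟨hlox, hxk⟩ := mem_Icc.1 hx
    rcases hlox.lt_or_eq with hlox | rfl
    · exact hI _ _ hloI (hreach x hlox hxk)
    · exact hloI
  rw [W_eq_sum_filter, mul_sum]
  symm
  refine sum_nbij' (Icc lo k ∪ ·) (· \ Icc lo k) ?_ ?_ ?_ ?_ ?_ <;>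
    simp only [mem_filter, mem_powerset]
  · rintro J ⟨hJ, hideal⟩
    refine ⟨union_subset (Icc_subset_Icc_right hk) (hJ.trans (Icc_subset_Icc_left (by omega))),
      (isIdeal_fenceGen_Icc_union_iff hlo hup hJ).2 hideal,
      mem_union_left _ (mem_Icc.2 ⟨le_rfl, hlo⟩)⟩
  · rintro I ⟨hI, hideal, hloI⟩
    have hsdiff : I \ Icc lo k ⊆ Icc (k + 1) hi := fun x hx => by
      obtain ⟨hxI, hxk⟩ := mem_sdiff.1 hx
      have := mem_Icc.1 (hI hxI)
      simp only [mem_Icc] at hxk ⊢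
      omega
    refine ⟨hsdiff, (isIdeal_fenceGen_Icc_union_iff hlo hup hsdiff).1 ?_⟩
    rwa [union_sdiff_of_subset (bottom_subset hideal hloI)]
  · rintro J ⟨hJ, -⟩
    exact union_sdiff_cancel_left (disjoint hJ)
  · rintro I ⟨-, hideal, hloI⟩
    exact union_sdiff_of_subset (bottom_subset hideal hloI)
  · rintro J ⟨hJ, -⟩
    rw [prod_union (disjoint hJ)]

end Truncation

section Graft

variable {h₁ h₂ : ℕ} {up₁ up₂ : ℕ → Bool} {I₁ I₂ : Finset ℕ}

theorem graftUp_of_lt {i : ℕ} (hi : i < h₁) : graftUp h₁ up₁ up₂ i = up₁ i := if_pos hi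

theorem graftUp_self : graftUp h₁ up₁ up₂ h₁ = true := by simp [graftUp]

theorem graftUp_add {i : ℕ} (hi : 1 ≤ i) : graftUp h₁ up₁ up₂ (i + h₁) = up₂ i := by
  rw [graftUp, if_neg (by omega), if_neg (by omega), Nat.add_sub_cancel]

theorem isIdeal_graft_iff (hh₁ : 1 ≤ h₁) (hI₁ : I₁ ⊆ Icc 1 h₁) (hI₂ : I₂ ⊆ Icc 1 h₂) :
    IsIdeal (fenceGen 1 (h₁ + h₂) (graftUp h₁ up₁ up₂)) (I₁ ∪ I₂.image (· + h₁)) ↔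
      IsIdeal (fenceGen 1 h₁ up₁) I₁ ∧ IsIdeal (fenceGen 1 h₂ up₂) I₂ ∧ (1 ∈ I₂ → h₁ ∈ I₁) := by
  have mem_low : ∀ x ≤ h₁, x ∈ I₁ ∪ I₂.image (· + h₁) ↔ x ∈ I₁ := fun x hx => by
    refine ⟨fun h => (mem_union.1 h).resolve_right fun hx₂ => ?_, mem_union_left _⟩
    obtain ⟨y, hy, rfl⟩ := mem_image.1 hx₂
    have := mem_Icc.1 (hI₂ hy); omega
  have mem_high : ∀ y, 1 ≤ y → (y + h₁ ∈ I₁ ∪ I₂.image (· + h₁) ↔ y ∈ I₂) := fun y hy => by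
    refine ⟨fun h => ?_, fun h => mem_union_right _ (mem_image_of_mem _ h)⟩
    rcases mem_union.1 h with h | h
    · have := mem_Icc.1 (hI₁ h); omega
    · obtain ⟨z, hz, hzy⟩ := mem_image.1 h
      rwa [← Nat.add_right_cancel hzy]
  simp only [isIdeal_fenceGen_iff]
  constructor
  · intro h
    refine ⟨fun i hi hih => ?_, fun i hi hih => ?_, fun h1 => ?_⟩
    · have := h i hi (by omega)
      rwa [mem_low i (by omega), mem_low (i + 1) hih, graftUp_of_lt (by omega)] at this
    · have := h (i + h₁) (by omega) (by omega)
      rwa [graftUp_add hi, add_right_comm, mem_high i hi, mem_high (i + 1) (by omega)] at this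
    · have := (h h₁ hh₁ (by have := mem_Icc.1 (hI₂ h1); omega)).1 graftUp_self
      rw [mem_low h₁ le_rfl, add_comm, mem_high 1 le_rfl] at this
      exact this h1
  · rintro ⟨h1, h2, hcompat⟩ i hi hih
    rcases lt_trichotomy i h₁ with hi₁ | rfl | hi₁
    · rw [mem_low i hi₁.le, mem_low (i + 1) hi₁, graftUp_of_lt hi₁]
      exact h1 i hi hi₁
    · rw [graftUp_self, mem_low _ le_rfl, add_comm, mem_high 1 le_rfl]
      simpa using hcompat
    · obtain ⟨j, rfl⟩ : ∃ j, i = j + h₁ := ⟨i - h₁, by omega⟩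
      rw [graftUp_add (by omega), add_right_comm, mem_high j (by omega),
        mem_high (j + 1) (by omega)]
      exact h2 j (by omega) (by omega)

theorem prod_graftWt {M : Type*} [CommMonoid M] (wt₁ wt₂ : ℕ → M) (hI₁ : I₁ ⊆ Icc 1 h₁)
    (hI₂ : I₂ ⊆ Icc 1 h₂) :
    ∏ x ∈ I₁ ∪ I₂.image (· + h₁), graftWt h₁ wt₁ wt₂ x = (∏ x ∈ I₁, wt₁ x) * ∏ x ∈ I₂, wt₂ x := by
  rw [prod_union, prod_image fun x _ y _ => Nat.add_right_cancel]
  · congr 1 <;> refine prod_congr rfl fun x hx => ?_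
    · exact if_pos (mem_Icc.1 (hI₁ hx)).2
    · have := mem_Icc.1 (hI₂ hx)
      rw [graftWt, if_neg (by omega), Nat.add_sub_cancel]
  · refine disjoint_left.2 fun x hx₁ hx₂ => ?_
    obtain ⟨y, hy, rfl⟩ := mem_image.1 hx₂
    have := mem_Icc.1 (hI₁ hx₁); have := mem_Icc.1 (hI₂ hy); omega

open Classical in
theorem W_graft {R : Type*} [CommRing R] (hh₁ : 1 ≤ h₁) (wt₁ wt₂ : ℕ → R) :
    W (Icc 1 (h₁ + h₂)) (fenceGen 1 (h₁ + h₂) (graftUp h₁ up₁ up₂)) (graftWt h₁ wt₁ wt₂) =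
      ∑ p ∈ (Icc 1 h₁).powerset ×ˢ (Icc 1 h₂).powerset with
          (IsIdeal (fenceGen 1 h₁ up₁) p.1 ∧ IsIdeal (fenceGen 1 h₂ up₂) p.2) ∧
            (1 ∈ p.2 → h₁ ∈ p.1),
        (∏ x ∈ p.1, wt₁ x) * ∏ x ∈ p.2, wt₂ x := by
  have hIcc : Icc 1 (h₁ + h₂) = Icc 1 h₁ ∪ (Icc 1 h₂).image (· + h₁) := by
    rw [image_add_right_Icc]; ext x; simp only [mem_union, mem_Icc]; omega
  have hdisj : Disjoint (Icc 1 h₁) ((Icc 1 h₂).image (· + h₁)) := by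
    rw [image_add_right_Icc, disjoint_left]
    intro x hx₁ hx₂; have := mem_Icc.1 hx₁; have := mem_Icc.1 hx₂; omega
  rw [W, hIcc, sum_powerset_union_image (fun _ _ _ _ => Nat.add_right_cancel) hdisj, sum_filter]
  refine sum_congr rfl fun p hp => ?_
  rw [mem_product, mem_powerset, mem_powerset] at hp
  simp only [isIdeal_graft_iff hh₁ hp.1 hp.2, prod_graftWt _ _ hp.1 hp.2, and_assoc]

end Graft

section Cuts

variable {h u v : ℕ} {up : ℕ → Bool}

theorem lowerCut_spec (hh : 1 ≤ h)
    (hu : (1 ≤ u ∧ u < h ∧ ¬ genLE (fenceGen 1 h up) h u ∧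
            ∀ i, u < i → i < h → genLE (fenceGen 1 h up) h i) ∨
          (u = 0 ∧ ∀ i, 1 ≤ i → i < h → genLE (fenceGen 1 h up) h i)) :
    u < h ∧ (∀ i, u < i → i < h → genLE (fenceGen 1 h up) h i) ∧ (1 ≤ u → up u = true) := by
  rcases hu with ⟨hu₁, hu, hnot, hreach⟩ | ⟨rfl, hreach⟩
  · refine ⟨hu, hreach, fun _ => up_eq_true_of_not_genLE hu₁ hu fun hstep => hnot ?_⟩
    rcases (show u + 1 ≤ h from hu).lt_or_eq with hlt | heq
    · exact (hreach _ (by omega) hlt).trans hstep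
    · rwa [heq] at hstep
  · exact ⟨hh, hreach, by omega⟩

theorem upperCut_spec (hh : 1 ≤ h)
    (hv : (1 < v ∧ v ≤ h ∧ ¬ genLE (fenceGen 1 h up) v 1 ∧
            ∀ i, 1 < i → i < v → genLE (fenceGen 1 h up) i 1) ∨
          (v = h + 1 ∧ ∀ i, 1 < i → i ≤ h → genLE (fenceGen 1 h up) i 1)) :
    ∃ k, v = k + 1 ∧ 1 ≤ k ∧ k ≤ h ∧ (∀ i, 1 < i → i ≤ k → genLE (fenceGen 1 h up) i 1) ∧
      (k < h → up k = true) := by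
  rcases hv with ⟨hv₁, hv, hnot, hreach⟩ | ⟨rfl, hreach⟩
  · obtain ⟨k, rfl⟩ : ∃ k, v = k + 1 := ⟨v - 1, by omega⟩
    have hk_pos : 1 ≤ k := by omega
    refine ⟨k, rfl, hk_pos, by omega, fun i hi hik => hreach i hi (by omega),
      fun _ => up_eq_true_of_not_genLE (lo := 1) hk_pos hv fun hstep => hnot ?_⟩
    rcases hk_pos.lt_or_eq with hlt | rfl
    · exact hstep.trans (hreach _ hlt (by omega))
    · exact hstep
  · exact ⟨h, rfl, hh, le_rfl, fun i hi hih => hreach i hi hih, by omega⟩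

end Cuts

/-- The skein relation for the grafting `P₃₄ = P₁ ↗ P₂` of two weighted fence posets:
`W(P₁)·W(P₂) = W(P₃₄) + Z·W(P₁[1,u])·W(P₂[v,h₂])`, where `u` is the largest index
`1 ≤ u < h₁` with `u ≯ h₁` in `P₁` (or `0` if none exists), `v` is the smallest
index `1 < v ≤ h₂` with `v ≮ 1` in `P₂` (or `h₂+1` if none exists), and
`Z = ∏_{i=1}^{v−1} wt₂ i`. -/
theorem fence_grafting_skein {R : Type*} [CommRing R]
    (h₁ h₂ : ℕ) (hh₁ : 1 ≤ h₁) (hh₂ : 1 ≤ h₂)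
    (up₁ up₂ : ℕ → Bool) (wt₁ wt₂ : ℕ → R) (u v : ℕ)
    (hu : (1 ≤ u ∧ u < h₁ ∧ ¬ genLE (fenceGen 1 h₁ up₁) h₁ u ∧
            ∀ i, u < i → i < h₁ → genLE (fenceGen 1 h₁ up₁) h₁ i) ∨
          (u = 0 ∧ ∀ i, 1 ≤ i → i < h₁ → genLE (fenceGen 1 h₁ up₁) h₁ i))
    (hv : (1 < v ∧ v ≤ h₂ ∧ ¬ genLE (fenceGen 1 h₂ up₂) v 1 ∧
            ∀ i, 1 < i → i < v → genLE (fenceGen 1 h₂ up₂) i 1) ∨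
          (v = h₂ + 1 ∧ ∀ i, 1 < i → i ≤ h₂ → genLE (fenceGen 1 h₂ up₂) i 1)) :
    W (Finset.Icc 1 h₁) (fenceGen 1 h₁ up₁) wt₁ *
        W (Finset.Icc 1 h₂) (fenceGen 1 h₂ up₂) wt₂ =
      W (Finset.Icc 1 (h₁ + h₂)) (fenceGen 1 (h₁ + h₂) (graftUp h₁ up₁ up₂))
          (graftWt h₁ wt₁ wt₂) +
        (∏ i ∈ Finset.Icc 1 (v - 1), wt₂ i) *
          (W (Finset.Icc 1 u) (fenceGen 1 u up₁) wt₁ *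
            W (Finset.Icc v h₂) (fenceGen v h₂ up₂) wt₂) := by
  classical
  obtain ⟨hu_lt, hu_reach, hu_up⟩ := lowerCut_spec hh₁ hu
  obtain ⟨k, rfl, hk_pos, hk_le, hk_reach, hk_up⟩ := upperCut_spec hh₂ hv
  have split (p : Finset ℕ × Finset ℕ) :
      ((IsIdeal (fenceGen 1 h₁ up₁) p.1 ∧ IsIdeal (fenceGen 1 h₂ up₂) p.2) ∧
          ¬(1 ∈ p.2 → h₁ ∈ p.1)) ↔
        (IsIdeal (fenceGen 1 h₁ up₁) p.1 ∧ h₁ ∉ p.1) ∧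
          (IsIdeal (fenceGen 1 h₂ up₂) p.2 ∧ 1 ∈ p.2) := by
    tauto
  rw [Nat.add_sub_cancel, mul_left_comm, ← sum_isIdeal_notMem_eq_W wt₁ hu_lt hu_reach hu_up,
    ← sum_isIdeal_mem_eq_mul_W wt₂ hk_pos hk_le hk_reach hk_up, ← sum_filter_product_mul,
    W_mul_W, ← sum_filter_add_sum_filter_not _ (fun p => 1 ∈ p.2 → h₁ ∈ p.1),
    filter_filter, filter_filter, ← W_graft hh₁, filter_congr fun p _ => split p]
end
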